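/- Let T be a simplicial tree, G a group acting on T by isometries, and h ∈ G a hyperbolic element with axis A and translation length t. Suppose B is a G-invariant family of pairwise disjoint geodesic lines in T (no two sharing an edge) and L ∈ B is a line with L ∩ A a segment of length s. Then for every integer k ≠ 0, the segments L ∩ A and hᵏ·(L ∩ A) can share an edge only if hᵏ·L = L; consequently if hᵏ·L ≠ L and hᵏ·L ∩ L contains no edge, the overlap L ∩ A has length at most t. -/
import Mathlib


/-- If `h` is a hyperbolic isometry of a tree translating its axis `c` by `t`, `L` is a
geodesic line with `h·L ≠ L` such that `L ∩ h·L` contains no edge, then any segment of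
the axis contained in `L` has length at most `t`. -/
theorem stmt_17 {V : Type*} (G : SimpleGraph V) (hT : G.IsTree) (t : ℕ) (ht : 0 < t)
    (c : ℤ → V) (hadj : ∀ n : ℤ, G.Adj (c n) (c (n + 1)))
    (hgeo : ∀ i j : ℤ, (G.dist (c i) (c j) : ℤ) = |i - j|)
    (h : V → V) (hiso : ∀ x y, G.dist (h x) (h y) = G.dist x y)
    (hinv : ∀ n : ℤ, h (c n) = c (n + t))
    (L : Set V) (hLline : ∃ c' : ℤ → V, Function.Injective c' ∧
      (∀ n : ℤ, G.Adj (c' n) (c' (n + 1))) ∧ L = Set.range c')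
    (hne : h '' L ≠ L)
    (hnoedge : ∀ x ∈ L ∩ (h '' L), ∀ y ∈ L ∩ (h '' L), ¬ G.Adj x y)
    (s : ℕ) (i : ℤ) (hseg : ∀ k : ℕ, k ≤ s → c (i + k) ∈ L) :
    s ≤ t := by
  by_contra hlt
  push_neg at hlt
  -- so t + 1 ≤ s
  have h1 : (t : ℕ) ≤ s := le_of_lt hlt
  have h2 : t + 1 ≤ s := hlt
  -- c (i + t) ∈ L and c (i + t + 1) ∈ L
  have mem1 : c (i + (t : ℤ)) ∈ L := by
    have := hseg t h1
    simpa using this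
  have mem2 : c (i + (t : ℤ) + 1) ∈ L := by
    have := hseg (t + 1) h2
    have e : i + ((t + 1 : ℕ) : ℤ) = i + (t : ℤ) + 1 := by push_cast; ring
    rwa [e] at this
  -- c (i + t) ∈ h '' L and c (i + t + 1) ∈ h '' L
  have mem1' : c (i + (t : ℤ)) ∈ h '' L := by
    refine ⟨c i, ?_, ?_⟩
    · simpa using hseg 0 (Nat.zero_le s)
    · exact hinv i
  have mem2' : c (i + (t : ℤ) + 1) ∈ h '' L := by
    refine ⟨c (i + 1), ?_, ?_⟩
    · have := hseg 1 (le_trans (by omega) h2)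
      simpa using this
    · rw [hinv (i + 1)]; ring_nf
  exact hnoedge _ ⟨mem1, mem1'⟩ _ ⟨mem2, mem2'⟩ (hadj (i + t))
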